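/- (Correctness of the Moreau projection for the squared ℓ₁-norm.) Let λ > 0 and x ∈ ℝ^p with x ≠ 0. Let y ∈ ℝ^p be the vector of absolute values |x_i| sorted in decreasing order, y₁ ≥ ⋯ ≥ y_p. Define ρ = max{ j ∈ {1, …, p} : y_j − (λ/(1 + jλ))·Σ_{r=1}^j y_r > 0 } and τ = (λ/(1 + ρλ))·Σ_{r=1}^ρ y_r. Then prox_{(λ/2)‖·‖₁²}(x) = soft(x, τ), i.e., the unique minimizer z of (1/2)‖z − x‖² + (λ/2)(Σ_{i=1}^p |z_i|)² satisfies z_i = sign(x_i)·max{0, |x_i| − τ} for every i. -/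

import Mathlib

/-!
The objective is strongly convex, so it suffices to check the optimality condition at
`w = soft(x, τ)`, namely `x - w ∈ λ ‖w‖₁ ∂‖·‖₁(w)`. Coordinatewise, `xᵢ - soft(xᵢ, τ)` is a
subgradient of `τ |·|` at `soft(xᵢ, τ)`, so everything reduces to the fixed-point equation
`τ = λ ‖w‖₁ = λ Σ_{j ≤ ρ} (y_j - τ)`, which is the defining formula for `τ` once we know that
`y_j > τ` exactly for `j ≤ ρ`. Above `ρ` this follows from sortedness, since the failure of the
split condition at `ρ + 1` is equivalent to `y_{ρ+1} ≤ τ`.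
-/

noncomputable section

/-- The prox objective for the squared `ℓ₁`-norm:
`(1/2)‖z − x‖² + (λ/2)(Σᵢ |zᵢ|)²`, the Euclidean norm written as a sum of
squares of the coordinates. -/
def sqL1Obj {p : ℕ} (lam : ℝ) (x z : Fin p → ℝ) : ℝ :=
  (1 / 2) * (∑ i, (z i - x i) ^ 2) + lam / 2 * (∑ i, |z i|) ^ 2

/-- The split-index condition for index `j` (under the sorting permutation `π`
of the absolute values `y_{(j)} = |x_{(j)}|`, with `j`-th prefix of
cardinality `(Iic j).card = j + 1`):
`y_j − (λ/(1 + jλ)) Σ_{r=1}^j y_r > 0` (`1`-indexed in the paper). -/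
def sqL1SplitCond {p : ℕ} (lam : ℝ) (x : Fin p → ℝ) (π : Equiv.Perm (Fin p))
    (j : Fin p) : Prop :=
  lam / (1 + (Finset.Iic j).card * lam) * (∑ r ∈ Finset.Iic j, |x (π r)|) < |x (π j)|

open Finset

def softThreshold (τ t : ℝ) : ℝ := Real.sign t * max 0 (|t| - τ)

lemma abs_softThreshold {τ : ℝ} (hτ : 0 ≤ τ) (t : ℝ) :
    |softThreshold τ t| = max 0 (|t| - τ) := by
  rcases lt_trichotomy t 0 with ht | rfl | ht
  · simp [softThreshold, Real.sign_of_neg ht]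
  · simp [softThreshold, hτ]
  · simp [softThreshold, Real.sign_of_pos ht]

lemma softThreshold_variational {τ : ℝ} (hτ : 0 ≤ τ) (t v : ℝ) :
    (t - softThreshold τ t) * (v - softThreshold τ t) ≤ τ * (|v| - |softThreshold τ t|) := by
  rw [abs_softThreshold hτ]
  rcases le_total |t| τ with h | h
  · have : t * v ≤ τ * |v| :=
      (le_abs_self _).trans ((abs_mul t v).trans_le (by gcongr))
    simpa [softThreshold, max_eq_left (sub_nonpos.2 h)] using this
  · rcases lt_trichotomy t 0 with ht | rfl | ht
    · rw [abs_of_neg ht] at h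
      simp only [softThreshold, Real.sign_of_neg ht, abs_of_neg ht, max_eq_right (sub_nonneg.2 h)]
      nlinarith [neg_abs_le v]
    · simpa [softThreshold, hτ] using mul_nonneg hτ (abs_nonneg v)
    · rw [abs_of_pos ht] at h
      simp only [softThreshold, Real.sign_of_pos ht, abs_of_pos ht, max_eq_right (sub_nonneg.2 h)]
      nlinarith [le_abs_self v]

lemma sqL1Obj_add_le_of_eq_softThreshold {p : ℕ} {lam τ : ℝ} (hlam : 0 ≤ lam) {x w : Fin p → ℝ}
    (hw : ∀ i, w i = softThreshold τ (x i)) (hτ : τ = lam * ∑ i, |w i|) (v : Fin p → ℝ) :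
    sqL1Obj lam x w + 1 / 2 * ∑ i, (v i - w i) ^ 2 ≤ sqL1Obj lam x v := by
  have hτ0 : 0 ≤ τ := hτ ▸ mul_nonneg hlam (sum_nonneg fun i _ ↦ abs_nonneg _)
  have hsq : ∑ i, (v i - x i) ^ 2
      = ∑ i, (w i - x i) ^ 2 - 2 * ∑ i, (x i - w i) * (v i - w i) + ∑ i, (v i - w i) ^ 2 := by
    rw [mul_sum, ← sum_sub_distrib, ← sum_add_distrib]
    exact sum_congr rfl fun i _ ↦ by ring
  have hsub : ∑ i, (x i - w i) * (v i - w i) ≤ τ * (∑ i, |v i| - ∑ i, |w i|) := by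
    rw [← sum_sub_distrib, mul_sum]
    exact sum_le_sum fun i _ ↦ hw i ▸ softThreshold_variational hτ0 (x i) (v i)
  have hτw : τ * (∑ i, |v i| - ∑ i, |w i|) = lam * (∑ i, |w i|) * (∑ i, |v i| - ∑ i, |w i|) := by
    rw [hτ]
  have hgrow : 0 ≤ lam * (∑ i, |v i| - ∑ i, |w i|) ^ 2 := by positivity
  unfold sqL1Obj
  linarith

lemma sum_max_zero_sub_eq_sum_Iic {ι : Type*} [Fintype ι] [LinearOrder ι] [LocallyFiniteOrderBot ι]
    {y : ι → ℝ} {τ : ℝ} {ρ : ι} (hgt : ∀ j ≤ ρ, τ < y j) (hle : ∀ j, ρ < j → y j ≤ τ) :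
    ∑ j, max 0 (y j - τ) = ∑ j ∈ Iic ρ, (y j - τ) := by
  rw [← sum_subset (subset_univ (Iic ρ)) fun j _ hj ↦
    max_eq_left (sub_nonpos.2 (hle j (not_le.1 (mem_Iic.not.1 hj))))]
  exact sum_congr rfl fun j hj ↦ max_eq_right (sub_nonneg.2 (hgt j (mem_Iic.1 hj)).le)

lemma abs_le_of_not_sqL1SplitCond {p : ℕ} {lam : ℝ} (hlam : 0 ≤ lam) {x : Fin p → ℝ}
    {π : Equiv.Perm (Fin p)} {ρ s : Fin p} (hρs : ρ ⋖ s) (hs : ¬ sqL1SplitCond lam x π s) :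
    |x (π s)| ≤ lam / (1 + (Iic ρ).card * lam) * ∑ r ∈ Iic ρ, |x (π r)| := by
  have hIio : Iio s = Iic ρ := coe_injective (by simpa using hρs.Iio_eq)
  have hIic : Iic s = insert s (Iic ρ) := by rw [← Iio_insert, hIio]
  have hs_notMem : s ∉ Iic ρ := fun h ↦ hρs.lt.not_ge (mem_Iic.1 h)
  rw [sqL1SplitCond, not_lt, hIic, sum_insert hs_notMem, card_insert_of_notMem hs_notMem] at hs
  push_cast at hs
  have hden : 0 < 1 + ((Iic ρ).card : ℝ) * lam := by positivity
  rw [div_mul_eq_mul_div, le_div_iff₀ (by positivity)] at hs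
  rw [div_mul_eq_mul_div, le_div_iff₀ hden]
  linarith

lemma threshold_eq_mul_sum_abs_softThreshold {p : ℕ} {lam : ℝ} (hlam : 0 < lam) {x : Fin p → ℝ}
    {π : Equiv.Perm (Fin p)} (hsort : ∀ i j : Fin p, i ≤ j → |x (π j)| ≤ |x (π i)|) {ρ : Fin p}
    (hρ : sqL1SplitCond lam x π ρ) (hρmax : ∀ j : Fin p, sqL1SplitCond lam x π j → j ≤ ρ) {τ : ℝ}
    (hτ : τ = lam / (1 + (Iic ρ).card * lam) * ∑ r ∈ Iic ρ, |x (π r)|) :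
    τ = lam * ∑ i, |softThreshold τ (x i)| := by
  have hden : 0 < 1 + ((Iic ρ).card : ℝ) * lam := by positivity
  have hτ0 : 0 ≤ τ := hτ ▸ by positivity
  have hgt : ∀ j ≤ ρ, τ < |x (π j)| := fun j hj ↦ hτ ▸ hρ.trans_le (hsort j ρ hj)
  have hle : ∀ j, ρ < j → |x (π j)| ≤ τ := by
    intro j hj
    obtain ⟨s, hρs, hsj⟩ := hj.exists_covby_le
    have hs : ¬ sqL1SplitCond lam x π s := fun h ↦ hρs.lt.not_ge (hρmax s h)
    exact hτ ▸ (hsort s j hsj).trans (abs_le_of_not_sqL1SplitCond hlam.le hρs hs)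
  calc τ = lam * ∑ j ∈ Iic ρ, (|x (π j)| - τ) := by
        rw [sum_sub_distrib, sum_const, nsmul_eq_mul, hτ]
        field_simp
        ring
    _ = lam * ∑ i, |softThreshold τ (x i)| := by
        simp_rw [abs_softThreshold hτ0]
        rw [← Equiv.sum_comp π, sum_max_zero_sub_eq_sum_Iic hgt hle]

theorem sq_l1_prox_soft_threshold_general {p : ℕ} (lam : ℝ) (hlam : 0 < lam)
    (x : Fin p → ℝ)
    (π : Equiv.Perm (Fin p))
    (hsort : ∀ i j : Fin p, i ≤ j → |x (π j)| ≤ |x (π i)|)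
    (ρ : Fin p) (hρ : sqL1SplitCond lam x π ρ)
    (hρmax : ∀ j : Fin p, sqL1SplitCond lam x π j → j ≤ ρ)
    (τ : ℝ)
    (hτ : τ = lam / (1 + (Finset.Iic ρ).card * lam) * (∑ r ∈ Finset.Iic ρ, |x (π r)|))
    (z : Fin p → ℝ)
    (hmin : ∀ w : Fin p → ℝ, sqL1Obj lam x z ≤ sqL1Obj lam x w) :
    ∀ i : Fin p, z i = Real.sign (x i) * max 0 (|x i| - τ) := by
  set w : Fin p → ℝ := fun i ↦ softThreshold τ (x i)
  have hfix : τ = lam * ∑ i, |w i| :=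
    threshold_eq_mul_sum_abs_softThreshold hlam hsort hρ hρmax hτ
  have hgrowth := sqL1Obj_add_le_of_eq_softThreshold hlam.le (fun _ ↦ rfl) hfix z
  have hdist : ∑ i, (z i - w i) ^ 2 = 0 :=
    le_antisymm (by linarith [hmin w]) (sum_nonneg fun i _ ↦ sq_nonneg _)
  intro i
  have hzi := (sum_eq_zero_iff_of_nonneg fun i _ ↦ sq_nonneg (z i - w i)).1 hdist i (mem_univ i)
  exact sub_eq_zero.1 (pow_eq_zero_iff two_ne_zero |>.1 hzi)

/-- correctness of the Moreau projection for the squared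
`ℓ₁`-norm: with `x ≠ 0`, the absolute values of `x` sorted decreasingly by the
permutation `π`, `ρ` the largest index satisfying the split condition, and
`τ = (λ/(1 + ρλ)) Σ_{r=1}^ρ y_r`, the unique minimizer `z` of
`(1/2)‖z − x‖² + (λ/2)‖z‖₁²` is the soft-thresholding
`z_i = sign(x_i)·max{0, |x_i| − τ}`. -/
theorem sq_l1_prox_soft_threshold {p : ℕ} (lam : ℝ) (hlam : 0 < lam)
    (x : Fin p → ℝ) (hx : x ≠ 0)
    (π : Equiv.Perm (Fin p))
    (hsort : ∀ i j : Fin p, i ≤ j → |x (π j)| ≤ |x (π i)|)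
    (ρ : Fin p) (hρ : sqL1SplitCond lam x π ρ)
    (hρmax : ∀ j : Fin p, sqL1SplitCond lam x π j → j ≤ ρ)
    (τ : ℝ)
    (hτ : τ = lam / (1 + (Finset.Iic ρ).card * lam) * (∑ r ∈ Finset.Iic ρ, |x (π r)|))
    (z : Fin p → ℝ)
    (hmin : ∀ w : Fin p → ℝ, sqL1Obj lam x z ≤ sqL1Obj lam x w) :
    ∀ i : Fin p, z i = Real.sign (x i) * max 0 (|x i| - τ) :=
  sq_l1_prox_soft_threshold_general lam hlam x π hsort ρ hρ hρmax τ hτ z hmin
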